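/- arXiv:math/0306386 — 3 statements merged into one kernel-verified Lean document; each statement's English description precedes it below -/
import Mathlib

section
/- The Vandermonde function h_N(x) = ∏_{1 ≤ i < j ≤ N} (x_j - x_i) is harmonic on ℝ^N, i.e., its Laplacian ∑_{i=1}^N ∂²h_N/∂x_i² vanishes identically. -/
/-!
`h_N` is the Vandermonde determinant `det (x_i ^ j)`. Moving `x_i` alone changes only row `i`,
so by linearity of the determinant in that row, `∂²h_N/∂x_i²` is the determinant with row `i`
replaced by `D` applied to it, where `D` is the matrix of `d²/ds²` on polynomials of degree `< N`
in the monomial basis. Summing over `i` gives `tr D · h_N` (Jacobi's formula, which follows from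
`Mᵀ · adj Mᵀ = det M · 1`), and `tr D = 0` because `D` lowers degrees by two.
-/

noncomputable def vandermonde (N : ℕ) (x : Fin N → ℝ) : ℝ :=
  ∏ p ∈ Finset.univ.filter (fun p : Fin N × Fin N => p.1 < p.2), (x p.2 - x p.1)

open Finset
open scoped Matrix

namespace Matrix

section

variable {n R : Type*} [Fintype n] [DecidableEq n] [CommRing R]

theorem det_updateRow_eq_adjugate_transpose_mulVec (M : Matrix n n R) (i : n) (w : n → R) :
    (M.updateRow i w).det = (Mᵀ.adjugate *ᵥ w) i := by
  rw [← cramer_transpose_apply, cramer_eq_adjugate_mulVec]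

theorem sum_det_updateRow_mulVec (M B : Matrix n n R) :
    ∑ i, (M.updateRow i (B *ᵥ M i)).det = B.trace * M.det := by
  have hdiag : ∀ i, (M.updateRow i (B *ᵥ M i)).det = (Mᵀ.adjugate * B * Mᵀ) i i := fun i => by
    rw [det_updateRow_eq_adjugate_transpose_mulVec, mulVec_mulVec]
    rfl
  calc ∑ i, (M.updateRow i (B *ᵥ M i)).det = (Mᵀ.adjugate * B * Mᵀ).trace :=
        sum_congr rfl fun i _ => hdiag i
    _ = (Mᵀ * Mᵀ.adjugate * B).trace := trace_mul_cycle _ _ _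
    _ = B.trace * M.det := by
        rw [mul_adjugate, det_transpose, smul_mul, Matrix.one_mul, trace_smul, smul_eq_mul,
          mul_comm]

end

theorem vandermonde_update {R : Type*} [CommRing R] {N : ℕ} (x : Fin N → R) (i : Fin N) (s : R) :
    vandermonde (Function.update x i s) = (vandermonde x).updateRow i (fun j => s ^ (j : ℕ)) := by
  ext k j
  rcases eq_or_ne k i with rfl | hki
  · simp
  · simp [hki]

end Matrix

theorem iteratedDeriv_det_updateRow {𝕜 ι : Type*} [NontriviallyNormedField 𝕜] [Fintype ι]
    [DecidableEq ι] {k : ℕ} (M : Matrix ι ι 𝕜) (i : ι) {w : ι → 𝕜 → 𝕜} {t : 𝕜}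
    (hw : ∀ j, ContDiffAt 𝕜 k (w j) t) :
    iteratedDeriv k (fun s => (M.updateRow i (fun j => w j s)).det) t
      = (M.updateRow i (fun j => iteratedDeriv k (w j) t)).det := by
  simp only [Matrix.det_updateRow_eq_adjugate_transpose_mulVec, Matrix.mulVec, dotProduct]
  rw [iteratedDeriv_fun_sum fun j _ => contDiffAt_const.mul (hw j)]
  simp only [iteratedDeriv_const_mul_field]

section

variable (𝕜 : Type*) [NontriviallyNormedField 𝕜] (N : ℕ)

noncomputable def secondDerivMatrix : Matrix (Fin N) (Fin N) 𝕜 :=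
  Matrix.of fun j k => if (k : ℕ) + 2 = j then ((j : ℕ).descFactorial 2 : 𝕜) else 0

theorem trace_secondDerivMatrix : (secondDerivMatrix 𝕜 N).trace = 0 := by
  simp [Matrix.trace, secondDerivMatrix]

variable {𝕜 N}

theorem secondDerivMatrix_mulVec_pow (t : 𝕜) :
    secondDerivMatrix 𝕜 N *ᵥ (fun k => t ^ (k : ℕ))
      = fun j : Fin N => iteratedDeriv 2 (· ^ (j : ℕ)) t := by
  ext j
  rw [iteratedDeriv_pow]
  simp only [secondDerivMatrix, Matrix.mulVec, dotProduct, Matrix.of_apply, ite_mul, zero_mul]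
  rcases lt_or_ge (j : ℕ) 2 with hj | hj
  · simp only [Nat.descFactorial_eq_zero_iff_lt.mpr hj, Nat.cast_zero, zero_mul, ite_self,
      sum_const_zero]
  · rw [sum_eq_single ⟨j - 2, by omega⟩]
    · simp [Nat.sub_add_cancel hj]
    · intro k _ hk
      exact if_neg fun h => hk (Fin.ext (by dsimp only; omega))
    · simp

end

theorem vandermonde_eq_det_vandermonde (N : ℕ) (x : Fin N → ℝ) :
    vandermonde N x = (Matrix.vandermonde x).det := by
  rw [Matrix.det_vandermonde, vandermonde, prod_filter, Fintype.prod_prod_type]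
  refine prod_congr rfl fun i _ => ?_
  rw [← prod_filter]
  congr 1
  ext j
  simp

/-- The Vandermonde product `h_N` is harmonic on `ℝ^N`: the sum of its second
partial derivatives vanishes at every point. -/
theorem vandermonde_harmonic (N : ℕ) (x : Fin N → ℝ) :
    ∑ i : Fin N,
      iteratedDeriv 2 (fun s : ℝ => vandermonde N (Function.update x i s)) (x i) = 0 := by
  set V := Matrix.vandermonde x
  have hrow : ∀ i, iteratedDeriv 2 (fun s => vandermonde N (Function.update x i s)) (x i)
      = (V.updateRow i (secondDerivMatrix ℝ N *ᵥ V i)).det := by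
    intro i
    simp only [vandermonde_eq_det_vandermonde, Matrix.vandermonde_update]
    rw [iteratedDeriv_det_updateRow (w := fun (j : Fin N) (s : ℝ) => s ^ (j : ℕ)) _ _
      fun j => by fun_prop]
    rw [show V i = fun k : Fin N => x i ^ (k : ℕ) from rfl, secondDerivMatrix_mulVec_pow]
  simp only [hrow, Matrix.sum_det_updateRow_mulVec, trace_secondDerivMatrix, zero_mul]
end

section
/- The Karlin–McGregor determinant satisfies the Chapman–Kolmogorov (semigroup) identity: for all s, t > 0 and x, z ∈ ℝ^N with x_1 < ⋯ < x_N and z_1 < ⋯ < z_N, ∫_{y_1 < y_2 < ⋯ < y_N} f_N(s, y | x) f_N(t, z | y) dy = f_N(s + t, z | x). -/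
open MeasureTheory

noncomputable def heatKer (t x y : ℝ) : ℝ :=
  (2 * Real.pi * t) ^ (-(1:ℝ)/2) * Real.exp (-(y - x)^2 / (2 * t))

noncomputable def fKM (N : ℕ) (t : ℝ) (y x : Fin N → ℝ) : ℝ :=
  Matrix.det (Matrix.of fun i j : Fin N => heatKer t (x j) (y i))

def Weyl (N : ℕ) : Set (Fin N → ℝ) := {x | ∀ i j : Fin N, i < j → x i < x j}

/-!
Expanding both determinants and applying Fubini, the one-dimensional semigroup property
`∫ G_s(a, y) G_t(y, c) dy = G_{s+t}(a, c)` turns the integral over all of `ℝ^N` into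
`N! f_N(s + t, z | x)` (Andréief's identity). The integrand is invariant under permuting the
coordinates of `y`, since both determinants pick up the same sign, and up to a null set `ℝ^N` is
the disjoint union of the `N!` permuted copies of the Weyl chamber; so the integral over the
chamber is `1 / N!` of the full one.
-/

open Real Matrix Equiv Nat Finset

section HeatKernel

variable {s t : ℝ}

lemma heatKer_mul_heatKer (hs : 0 < s) (ht : 0 < t) (a c y : ℝ) :
    heatKer s a y * heatKer t y c =
      (2 * π * s) ^ (-(1 : ℝ) / 2) * (2 * π * t) ^ (-(1 : ℝ) / 2) *
        exp (-(c - a) ^ 2 / (2 * (s + t))) *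
        exp (-((s + t) / (2 * s * t)) * (y - (t * a + s * c) / (s + t)) ^ 2) := by
  have hst : s + t ≠ 0 := by positivity
  rw [heatKer, heatKer, mul_mul_mul_comm, ← exp_add, mul_assoc _ (exp _), ← exp_add]
  congr 2
  field_simp
  ring

lemma integrable_heatKer_mul_heatKer (hs : 0 < s) (ht : 0 < t) (a c : ℝ) :
    Integrable (fun y => heatKer s a y * heatKer t y c) := by
  simp only [heatKer_mul_heatKer hs ht]
  exact ((integrable_exp_neg_mul_sq (by positivity)).comp_sub_right _).const_mul _

lemma integral_heatKer_mul_heatKer (hs : 0 < s) (ht : 0 < t) (a c : ℝ) :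
    ∫ y, heatKer s a y * heatKer t y c = heatKer (s + t) a c := by
  have rpow_neg_half : ∀ u : ℝ, 0 < u → u ^ (-(1 : ℝ) / 2) = (√u)⁻¹ := fun u hu => by
    rw [neg_div, rpow_neg hu.le, sqrt_eq_rpow]
  have hconst : (2 * π * s) ^ (-(1 : ℝ) / 2) * (2 * π * t) ^ (-(1 : ℝ) / 2) *
      √(π / ((s + t) / (2 * s * t))) = (2 * π * (s + t)) ^ (-(1 : ℝ) / 2) := by
    rw [rpow_neg_half _ (by positivity), rpow_neg_half _ (by positivity),
      rpow_neg_half _ (by positivity), ← sqrt_inv, ← sqrt_inv, ← sqrt_inv,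
      ← sqrt_mul (by positivity), ← sqrt_mul (by positivity)]
    congr 1
    field_simp
  simp_rw [heatKer_mul_heatKer hs ht]
  rw [integral_const_mul,
    integral_sub_right_eq_self (fun y => exp (-((s + t) / (2 * s * t)) * y ^ 2)),
    integral_gaussian, heatKer, ← hconst]
  ring

end HeatKernel

lemma Matrix.det_eq_sum_sign_mul_prod_apply_perm {n R : Type*} [Fintype n] [DecidableEq n]
    [CommRing R] (M : Matrix n n R) :
    det M = ∑ σ : Perm n, ((Perm.sign σ : ℤ) : R) * ∏ i, M i (σ i) := by
  rw [← det_transpose, det_apply']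
  rfl

lemma Equiv.Perm.cast_sign_mul_self {n R : Type*} [Fintype n] [DecidableEq n] [Ring R]
    (σ : Perm n) : ((Perm.sign σ : ℤ) : R) * (Perm.sign σ : ℤ) = 1 := by
  rw [← Int.cast_mul, Int.units_coe_mul_self, Int.cast_one]

lemma det_mul_det_comp_perm {α R : Type*} [CommRing R] {N : ℕ} (f g : Fin N → α → R)
    (σ : Perm (Fin N)) (y : Fin N → α) :
    det (of fun i j => f j ((y ∘ σ) i)) * det (of fun i j => g i ((y ∘ σ) j)) =
      det (of fun i j => f j (y i)) * det (of fun i j => g i (y j)) := by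
  rw [show (of fun i j => f j ((y ∘ σ) i)) = (of fun i j => f j (y i)).submatrix σ id from rfl,
    show (of fun i j => g i ((y ∘ σ) j)) = (of fun i j => g i (y j)).submatrix id σ from rfl,
    det_permute, det_permute', mul_mul_mul_comm, Perm.cast_sign_mul_self, one_mul]

lemma det_mul_det_eq_sum_det_of_rows {α R : Type*} [CommRing R] {N : ℕ} (f g : Fin N → α → R)
    (y : Fin N → α) :
    det (of fun i j => f j (y i)) * det (of fun i j => g i (y j)) =
      ∑ τ : Perm (Fin N),
        ((Perm.sign τ : ℤ) : R) * det (of fun i j => f j (y i) * g (τ i) (y i)) := by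
  rw [det_apply' (of fun i j => g i (y j)), mul_sum]
  refine Finset.sum_congr rfl fun τ _ => ?_
  rw [mul_left_comm, mul_comm (det _), ← det_mul_column]
  simp only [of_apply, mul_comm]

section Andreief

variable {α : Type*} [MeasurableSpace α] {μ : Measure α} [SigmaFinite μ] {N : ℕ}

lemma integrable_det_of_rows {h : Fin N → Fin N → α → ℝ} (hh : ∀ i j, Integrable (h i j) μ) :
    Integrable (fun y => det (of fun i j => h i j (y i))) (Measure.pi fun _ => μ) := by
  simp only [det_eq_sum_sign_mul_prod_apply_perm, of_apply]
  exact integrable_finsetSum _ fun σ _ =>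
    (Integrable.fintype_prod fun i => hh i (σ i)).const_mul _

lemma integral_det_of_rows {h : Fin N → Fin N → α → ℝ} (hh : ∀ i j, Integrable (h i j) μ) :
    ∫ y, det (of fun i j => h i j (y i)) ∂Measure.pi (fun _ => μ) =
      det (of fun i j => ∫ w, h i j w ∂μ) := by
  simp only [det_eq_sum_sign_mul_prod_apply_perm, of_apply]
  rw [integral_finsetSum _ fun σ _ => (Integrable.fintype_prod fun i => hh i (σ i)).const_mul _]
  simp only [integral_const_mul, integral_fintype_prod_eq_prod]

lemma integrable_det_mul_det {f g : Fin N → α → ℝ}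
    (hfg : ∀ i j, Integrable (fun w => f i w * g j w) μ) :
    Integrable (fun y => det (of fun i j => f j (y i)) * det (of fun i j => g i (y j)))
      (Measure.pi fun _ => μ) := by
  simp only [det_mul_det_eq_sum_det_of_rows]
  exact integrable_finsetSum _ fun τ _ =>
    (integrable_det_of_rows fun i j => hfg j (τ i)).const_mul _

theorem integral_det_mul_det {f g : Fin N → α → ℝ}
    (hfg : ∀ i j, Integrable (fun w => f i w * g j w) μ) :
    ∫ y, det (of fun i j => f j (y i)) * det (of fun i j => g i (y j)) ∂Measure.pi (fun _ => μ) =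
      N ! * det (of fun i j => ∫ w, f j w * g i w ∂μ) := by
  have hrows (τ : Perm (Fin N)) :
      ∫ y, det (of fun i j => f j (y i) * g (τ i) (y i)) ∂Measure.pi (fun _ => μ) =
        (Perm.sign τ : ℤ) * det (of fun i j => ∫ w, f j w * g i w ∂μ) :=
    (integral_det_of_rows fun i j => hfg j (τ i)).trans
      (det_permute τ (of fun i j => ∫ w, f j w * g i w ∂μ))
  simp only [det_mul_det_eq_sum_det_of_rows]
  rw [integral_finsetSum _ fun τ _ =>
    (integrable_det_of_rows fun i j => hfg j (τ i)).const_mul _]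
  simp only [integral_const_mul, hrows, ← mul_assoc, Perm.cast_sign_mul_self, one_mul, sum_const,
    Finset.card_univ, Fintype.card_perm, Fintype.card_fin, nsmul_eq_mul]

end Andreief

lemma volume_setOf_apply_eq_apply {ι : Type*} [Fintype ι] [DecidableEq ι] {i j : ι}
    (hij : i ≠ j) : volume {y : ι → ℝ | y i = y j} = 0 := by
  let L : (ι → ℝ) →ₗ[ℝ] ℝ := (LinearMap.proj i : (ι → ℝ) →ₗ[ℝ] ℝ) - LinearMap.proj j
  have hL : {y : ι → ℝ | y i = y j} = LinearMap.ker L := by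
    ext y
    simp [L, sub_eq_zero]
  rw [hL]
  refine Measure.addHaar_submodule _ _ fun htop => ?_
  have hsingle : L (Pi.single i 1) = 0 := LinearMap.mem_ker.1 (htop ▸ Submodule.mem_top)
  simp [L, Pi.single_eq_of_ne' hij] at hsingle

section WeylChamber

variable {N : ℕ}

lemma measurableSet_weyl : MeasurableSet (Weyl N) := by
  simp only [Weyl, Set.ofPred_forall]
  exact .iInter fun i => .iInter fun j => .iInter fun _ =>
    measurableSet_lt (measurable_pi_apply i) (measurable_pi_apply j)

lemma eq_of_comp_perm_mem_weyl {y : Fin N → ℝ} {σ τ : Perm (Fin N)} (hσ : y ∘ σ ∈ Weyl N)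
    (hτ : y ∘ τ ∈ Weyl N) : σ = τ := by
  have hσ' : StrictMono (y ∘ σ) := fun i j => hσ i j
  have hτ' : StrictMono (y ∘ τ) := fun i j => hτ i j
  have hy : Function.Injective y := hσ'.injective.of_comp_right σ.surjective
  exact Equiv.ext fun i => hy (congrFun (Tuple.unique_monotone hσ'.monotone hτ'.monotone) i)

lemma ae_exists_comp_perm_mem_weyl : ∀ᵐ y : Fin N → ℝ, ∃ σ : Perm (Fin N), y ∘ σ ∈ Weyl N := by
  have hinj : ∀ᵐ y : Fin N → ℝ, Function.Injective y := by
    simp only [Function.Injective, ae_all_iff]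
    intro i j
    rcases eq_or_ne i j with rfl | hij
    · exact .of_forall fun _ _ => rfl
    · exact ae_iff.2 (measure_mono_null (fun y hy => (Classical.not_imp.1 hy).1)
        (volume_setOf_apply_eq_apply hij))
  filter_upwards [hinj] with y hy
  exact ⟨Tuple.sort y, fun i j hij => ((Tuple.monotone_sort y).strictMono_of_injective
    (hy.comp (Tuple.sort y).injective)) hij⟩

lemma measurePreserving_comp_perm (σ : Perm (Fin N)) :
    MeasurePreserving (fun y : Fin N → ℝ => y ∘ σ) :=
  volume_preserving_arrowCongr' σ.symm (MeasurableEquiv.refl ℝ) (MeasurePreserving.id volume)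

lemma setIntegral_comp_perm_preimage_weyl {E : Type*} [NormedAddCommGroup E] [NormedSpace ℝ E]
    {F : (Fin N → ℝ) → E} (σ : Perm (Fin N)) (hF : ∀ y, F (y ∘ σ) = F y) :
    ∫ y in (· ∘ σ) ⁻¹' Weyl N, F y = ∫ y in Weyl N, F y := by
  simpa only [hF] using (measurePreserving_comp_perm σ).setIntegral_preimage_emb
    (MeasurableEquiv.arrowCongr' σ.symm (MeasurableEquiv.refl ℝ)).measurableEmbedding F (Weyl N)

theorem integral_eq_factorial_smul_setIntegral_weyl {E : Type*} [NormedAddCommGroup E]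
    [NormedSpace ℝ E] {F : (Fin N → ℝ) → E} (hF : Integrable F)
    (hsymm : ∀ (σ : Perm (Fin N)) y, F (y ∘ σ) = F y) :
    ∫ y, F y = N ! • ∫ y in Weyl N, F y := by
  have hcover : (⋃ σ : Perm (Fin N), (· ∘ σ) ⁻¹' Weyl N) =ᵐ[volume] Set.univ := by
    refine ae_eq_univ.2 (ae_iff.1 ?_)
    exact ae_exists_comp_perm_mem_weyl.mono fun y ⟨σ, hσ⟩ => Set.mem_iUnion.2 ⟨σ, hσ⟩
  rw [← setIntegral_univ, ← setIntegral_congr_set hcover,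
    integral_iUnion_fintype
      (fun σ => measurableSet_weyl.preimage (measurePreserving_comp_perm σ).measurable)
      (fun σ τ hστ => Set.disjoint_left.2 fun y hσ hτ => hστ (eq_of_comp_perm_mem_weyl hσ hτ))
      (fun _ => hF.integrableOn)]
  simp only [setIntegral_comp_perm_preimage_weyl _ (hsymm _), sum_const, Finset.card_univ,
    Fintype.card_perm, Fintype.card_fin]

end WeylChamber

theorem fKM_chapman_kolmogorov_general (N : ℕ) (s t : ℝ) (hs : 0 < s) (ht : 0 < t)
    (x z : Fin N → ℝ) :
    ∫ y in Weyl N, fKM N s y x * fKM N t z y = fKM N (s + t) z x := by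
  have hint : ∀ i j, Integrable (fun w => heatKer s (x i) w * heatKer t w (z j)) :=
    fun i j => integrable_heatKer_mul_heatKer hs ht _ _
  have hfull : ∫ y, fKM N s y x * fKM N t z y = N ! * fKM N (s + t) z x := by
    rw [volume_pi, fKM, ← funext fun i => funext fun j => integral_heatKer_mul_heatKer hs ht _ _]
    exact integral_det_mul_det hint
  rw [integral_eq_factorial_smul_setIntegral_weyl (F := fun y => fKM N s y x * fKM N t z y)
    (integrable_det_mul_det hint)
    (det_mul_det_comp_perm (fun j w => heatKer s (x j) w) (fun i w => heatKer t w (z i))),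
    nsmul_eq_mul] at hfull
  exact mul_left_cancel₀ (by positivity) hfull

/-- The Chapman–Kolmogorov (semigroup) identity for the Karlin–McGregor determinant. -/
theorem fKM_chapman_kolmogorov (N : ℕ) (s t : ℝ) (hs : 0 < s) (ht : 0 < t)
    (x z : Fin N → ℝ) (hx : x ∈ Weyl N) (hz : z ∈ Weyl N) :
    ∫ y in Weyl N, fKM N s y x * fKM N t z y = fKM N (s + t) z x :=
  fKM_chapman_kolmogorov_general N s t hs ht x z
end

section
/- The Karlin–McGregor determinant is strictly positive inside the Weyl chamber: for all t > 0 and x, y ∈ ℝ^N with x_1 < ⋯ < x_N and y_1 < ⋯ < y_N, one has f_N(t, y | x) = det_{1≤i,j≤N}[G_t(x_j, y_i)] > 0. -/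
open Real Finset Matrix

theorem exists_strictMono_deriv_eq_zero {n : ℕ} {f : ℝ → ℝ} (hf : Differentiable ℝ f)
    {w : Fin (n + 1) → ℝ} (hw : StrictMono w) (hz : ∀ j, f (w j) = 0) :
    ∃ v : Fin n → ℝ, StrictMono v ∧ ∀ j, deriv f (v j) = 0 := by
  have hroll (j : Fin n) : ∃ v ∈ Set.Ioo (w j.castSucc) (w j.succ), deriv f v = 0 :=
    exists_deriv_eq_zero (hw j.castSucc_lt_succ) hf.continuous.continuousOn
      (by rw [hz, hz])
  choose v hv hv' using hroll
  refine ⟨v, fun j k hjk => ?_, hv'⟩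
  calc v j < w j.succ := (hv j).2
    _ ≤ w k.castSucc := hw.monotone (Fin.succ_le_castSucc_iff.mpr hjk)
    _ < v k := (hv k).1

theorem hasDerivAt_sum_mul_exp_mul {n : ℕ} (c a : Fin n → ℝ) (v : ℝ) :
    HasDerivAt (fun v => ∑ i, c i * exp (a i * v)) (∑ i, c i * a i * exp (a i * v)) v :=
  .fun_sum fun i _ =>
    ((((hasDerivAt_id' v).const_mul (a i)).exp).const_mul (c i)).congr_deriv (by ring)

theorem eq_zero_of_sum_mul_exp_mul_eq_zero {n : ℕ} {a w : Fin n → ℝ} (ha : StrictMono a)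
    (hw : StrictMono w) {c : Fin n → ℝ} (hz : ∀ j, ∑ i, c i * exp (a i * w j) = 0) : c = 0 := by
  induction n with
  | zero => exact Subsingleton.elim _ _
  | succ n ih =>
    set b : Fin (n + 1) → ℝ := fun i => a i - a 0
    have hzb (j) : ∑ i, c i * exp (b i * w j) = 0 := by
      have : ∑ i, c i * exp (b i * w j) = (∑ i, c i * exp (a i * w j)) * exp (-(a 0 * w j)) := by
        rw [Finset.sum_mul]
        refine Finset.sum_congr rfl fun i _ => ?_
        rw [mul_assoc, ← exp_add]
        congr 2
        ring
      rw [this, hz j, zero_mul]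
    obtain ⟨v, hv, hv'⟩ := exists_strictMono_deriv_eq_zero
      (fun v => (hasDerivAt_sum_mul_exp_mul c b v).differentiableAt) hw hzb
    have hc' : (fun i : Fin n => c i.succ * b i.succ) = 0 := by
      refine ih (a := fun i => b i.succ)
        (fun i j hij => sub_lt_sub_right (ha (Fin.succ_lt_succ_iff.mpr hij)) _) hv
        fun j => ?_
      have := hv' j
      rw [(hasDerivAt_sum_mul_exp_mul c b (v j)).deriv, Fin.sum_univ_succ] at this
      simpa [b] using this
    have hcsucc (i : Fin n) : c i.succ = 0 :=
      (mul_eq_zero.mp (congrFun hc' i)).resolve_right (sub_pos.mpr (ha i.succ_pos)).ne'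
    have hc0 : c 0 = 0 := by
      have := hz 0
      simp only [Fin.sum_univ_succ, hcsucc, zero_mul, Finset.sum_const_zero, add_zero] at this
      exact (mul_eq_zero.mp this).resolve_right (exp_ne_zero _)
    funext i
    exact Fin.cases hc0 hcsucc i

theorem det_exp_mul_ne_zero {n : ℕ} {a w : Fin n → ℝ} (ha : StrictMono a) (hw : StrictMono w) :
    (of fun i j => exp (a i * w j)).det ≠ 0 := by
  intro hdet
  obtain ⟨c, hc, hmul⟩ := exists_vecMul_eq_zero_iff.mpr hdet
  exact hc <| eq_zero_of_sum_mul_exp_mul_eq_zero ha hw fun j => by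
    simpa [vecMul, dotProduct] using congrFun hmul j

theorem det_vandermonde_pos {n : ℕ} {v : Fin n → ℝ} (hv : StrictMono v) :
    0 < (vandermonde v).det := by
  rw [det_vandermonde]
  exact prod_pos fun i _ => prod_pos fun j hj => sub_pos.mpr (hv (mem_Ioi.mp hj))

theorem convex_setOf_strictMono {ι : Type*} [Preorder ι] :
    Convex ℝ {a : ι → ℝ | StrictMono a} := by
  intro a ha b hb s t hs ht hst i j hij
  have hai := ha hij
  have hbi := hb hij
  simp only [Pi.add_apply, Pi.smul_apply, smul_eq_mul]
  rcases hs.eq_or_lt with rfl | hs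
  · obtain rfl : t = 1 := by linarith
    linarith
  · nlinarith [mul_lt_mul_of_pos_left hai hs, mul_le_mul_of_nonneg_left hbi.le ht]

theorem IsPreconnected.pos_of_forall_ne_zero {α : Type*} [TopologicalSpace α] {s : Set α}
    (hs : IsPreconnected s) {f : α → ℝ} (hf : ContinuousOn f s) (hne : ∀ x ∈ s, f x ≠ 0)
    {a b : α} (ha : a ∈ s) (hfa : 0 < f a) (hb : b ∈ s) : 0 < f b := by
  by_contra! hfb
  obtain ⟨x, hx, hfx⟩ := hs.intermediate_value hb ha hf ⟨hfb, hfa.le⟩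
  exact hne x hx hfx

theorem det_exp_mul_pos {n : ℕ} {a w : Fin n → ℝ} (ha : StrictMono a) (hw : StrictMono w) :
    0 < (of fun i j => exp (a i * w j)).det := by
  have hS : IsPreconnected ({a : Fin n → ℝ | StrictMono a} ×ˢ {w : Fin n → ℝ | StrictMono w}) :=
    (convex_setOf_strictMono.prod convex_setOf_strictMono).isPreconnected
  have hcont : Continuous fun p : (Fin n → ℝ) × (Fin n → ℝ) =>
      (of fun i j => exp (p.1 i * p.2 j)).det :=
    Continuous.matrix_det <| continuous_matrix fun i j => by fun_prop
  have hnat : StrictMono fun i : Fin n => (i : ℝ) := fun _ _ h => Nat.cast_lt.mpr h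
  refine hS.pos_of_forall_ne_zero (a := ((↑), (↑))) (b := (a, w)) hcont.continuousOn
    (fun p hp => det_exp_mul_ne_zero hp.1 hp.2) ⟨hnat, hnat⟩ ?_ ⟨ha, hw⟩
  have hvand : (of fun i j : Fin n => exp ((i : ℝ) * j)) = vandermonde fun i => exp i := by
    ext i j
    rw [of_apply, vandermonde_apply, ← exp_nat_mul, mul_comm]
  rw [hvand]
  exact det_vandermonde_pos (exp_strictMono.comp hnat)

theorem heatKer_eq (t x y : ℝ) (ht : t ≠ 0) :
    heatKer t x y = ((2 * π * t) ^ (-(1:ℝ)/2) * exp (-y ^ 2 / (2 * t))) *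
      (exp (-x ^ 2 / (2 * t)) * exp (y / t * x)) := by
  simp only [heatKer, mul_assoc, ← exp_add]
  congr 2
  field_simp
  ring

/-- Strict positivity of the Karlin–McGregor determinant inside the Weyl chamber. -/
theorem fKM_pos (N : ℕ) (t : ℝ) (ht : 0 < t) (x y : Fin N → ℝ)
    (hx : ∀ i j : Fin N, i < j → x i < x j)
    (hy : ∀ i j : Fin N, i < j → y i < y j) :
    0 < fKM N t y x := by
  have hfactor : (of fun i j : Fin N => heatKer t (x j) (y i)) =
      diagonal (fun i => (2 * π * t) ^ (-(1:ℝ)/2) * exp (-y i ^ 2 / (2 * t))) *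
        (of fun i j => exp (y i / t * x j)) * diagonal (fun j => exp (-x j ^ 2 / (2 * t))) := by
    ext i j
    simp only [mul_diagonal, diagonal_mul, of_apply]
    rw [heatKer_eq t (x j) (y i) ht.ne']
    ring
  have hdet : 0 < (of fun i j : Fin N => exp (y i / t * x j)).det :=
    det_exp_mul_pos (fun i j hij => div_lt_div_of_pos_right (hy i j hij) ht) fun i j => hx i j
  rw [fKM, hfactor, det_mul, det_mul, det_diagonal, det_diagonal]
  positivity
end
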